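/- arXiv:2407.00618 — 3 statements merged into one kernel-verified Lean document; each statement's English description precedes it below -/
import Mathlib

section
/- Let (g,[·,·]) be a Super-Lie superalgebra of parity p and let R : g → g be a homogeneous linear map of parity r that is a left Rota-Baxter operator, i.e. [R(x),R(y)] = R([R(x),y] + (-1)^{r(|y|+r+p)}[x,R(y)]) for all homogeneous x,y. Then the product x▷y := [R(x),y] defines a super-left-symmetric superalgebra structure of parity r+p on g: ass_▷(x,y,z) = (-1)^{(|x|+r+p)(|y|+r+p)} ass_▷(y,x,z). -/
/-! Super-skewsymmetry turns the Rota-Baxter identity into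
`[R x, R y] = R (x ▷ y) - ε R (y ▷ x)` with `ε` the sign of `ass_▷`; substituting this into the
Jacobi identity for `R x, R y, z`, the term `R (x ▷ y) ▷ z` cancels and what is left is
`ε • ass_▷(y, x, z)`. -/

/-- The sign `(-1)^e` for `e : ZMod 2`. -/
def pm (K : Type*) [Field K] (e : ZMod 2) : K := (-1 : K) ^ e.val

lemma pm_add (K : Type*) [Field K] (a b : ZMod 2) :
    pm K (a + b) = pm K a * pm K b := by
  rw [pm, pm, pm, ← pow_add, ZMod.val_add, ← neg_one_pow_eq_pow_mod_two]

lemma bracket_rotaBaxter_eq {K V : Type*} [Field K] [AddCommGroup V] [Module K V]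
    {G : ZMod 2 → Submodule K V} {p : ZMod 2} {m : V →ₗ[K] V →ₗ[K] V}
    (hskew : ∀ i j : ZMod 2, ∀ x ∈ G i, ∀ y ∈ G j,
      m x y = (-(pm K ((i + p) * (j + p)))) • m y x)
    {r : ZMod 2} {R : V →ₗ[K] V}
    (hRg : ∀ i : ZMod 2, ∀ x ∈ G i, R x ∈ G (i + r))
    (hRB : ∀ i j : ZMod 2, ∀ x ∈ G i, ∀ y ∈ G j,
      m (R x) (R y) = R (m (R x) y + pm K (r * (j + r + p)) • m x (R y)))
    {i j : ZMod 2} {x y : V} (hx : x ∈ G i) (hy : y ∈ G j) :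
    m (R x) (R y)
      = R (m (R x) y) - pm K ((i + r + p) * (j + r + p)) • R (m (R y) x) := by
  have hsign : pm K ((i + r + p) * (j + r + p))
      = pm K (r * (j + r + p)) * pm K ((i + p) * (j + r + p)) := by
    rw [← pm_add]; congr 1; ring
  rw [hRB i j x hx y hy, hskew i (j + r) x hx (R y) (hRg j y hy), hsign]
  simp only [map_add, map_smul]
  module

theorem stmt_6_general (K V : Type*) [Field K] [AddCommGroup V] [Module K V]
    (G : ZMod 2 → Submodule K V) (p : ZMod 2) (m : V →ₗ[K] V →ₗ[K] V)
    (hskew : ∀ i j : ZMod 2, ∀ x ∈ G i, ∀ y ∈ G j,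
      m x y = (-(pm K ((i + p) * (j + p)))) • m y x)
    (hjac : ∀ i j k : ZMod 2, ∀ x ∈ G i, ∀ y ∈ G j, ∀ z ∈ G k,
      m x (m y z) = m (m x y) z + pm K ((i + p) * (j + p)) • m y (m x z))
    (r : ZMod 2) (R : V →ₗ[K] V)
    (hRg : ∀ i : ZMod 2, ∀ x ∈ G i, R x ∈ G (i + r))
    (hRB : ∀ i j : ZMod 2, ∀ x ∈ G i, ∀ y ∈ G j,
      m (R x) (R y) = R (m (R x) y + pm K (r * (j + r + p)) • m x (R y))) :
    ∀ i j k : ZMod 2, ∀ x ∈ G i, ∀ y ∈ G j, ∀ z ∈ G k,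
      m (R (m (R x) y)) z - m (R x) (m (R y) z)
        = pm K ((i + r + p) * (j + r + p)) •
            (m (R (m (R y) x)) z - m (R y) (m (R x) z)) := by
  intro i j k x hx y hy z hz
  have hRxRy := bracket_rotaBaxter_eq hskew hRg hRB hx hy
  have hJacobi := hjac (i + r) (j + r) k (R x) (hRg i x hx) (R y) (hRg j y hy) z hz
  rw [hJacobi, hRxRy]
  simp only [map_sub, map_smul, LinearMap.sub_apply, LinearMap.smul_apply]
  module

/-- if `R` is a left Rota-Baxter operator of parity `r` on a Super-Lie
superalgebra of parity `p`, then `x ▷ y := [R x, y]` is super-left-symmetric of parity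
`r + p`. -/
theorem stmt_6 (K V : Type*) [Field K] [AddCommGroup V] [Module K V]
    (G : ZMod 2 → Submodule K V) (p : ZMod 2) (m : V →ₗ[K] V →ₗ[K] V)
    (hgrad : ∀ i j : ZMod 2, ∀ x ∈ G i, ∀ y ∈ G j, m x y ∈ G (i + j + p))
    (hskew : ∀ i j : ZMod 2, ∀ x ∈ G i, ∀ y ∈ G j,
      m x y = (-(pm K ((i + p) * (j + p)))) • m y x)
    (hjac : ∀ i j k : ZMod 2, ∀ x ∈ G i, ∀ y ∈ G j, ∀ z ∈ G k,
      m x (m y z) = m (m x y) z + pm K ((i + p) * (j + p)) • m y (m x z))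
    (r : ZMod 2) (R : V →ₗ[K] V)
    (hRg : ∀ i : ZMod 2, ∀ x ∈ G i, R x ∈ G (i + r))
    (hRB : ∀ i j : ZMod 2, ∀ x ∈ G i, ∀ y ∈ G j,
      m (R x) (R y) = R (m (R x) y + pm K (r * (j + r + p)) • m x (R y))) :
    ∀ i j k : ZMod 2, ∀ x ∈ G i, ∀ y ∈ G j, ∀ z ∈ G k,
      m (R (m (R x) y)) z - m (R x) (m (R y) z)
        = pm K ((i + r + p) * (j + r + p)) •
            (m (R (m (R y) x)) z - m (R y) (m (R x) z)) :=
  stmt_6_general K V G p m hskew hjac r R hRg hRB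
end

section
/- Let D be a homogeneous invertible linear map on a Super-Lie superalgebra (g,[·,·]) of parity p, with inverse of the same parity. Then D is a left derivation (D[x,y] = [D(x),y] + (-1)^{|D|(|x|+p)}[x,D(y)]) if and only if D^{-1} is a right Rota-Baxter operator: [D^{-1}(X), D^{-1}(Y)] = D^{-1}([X, D^{-1}(Y)] + (-1)^{|D|(|D|+|X|+p)}[D^{-1}(X), Y]) for all homogeneous X,Y. -/
/-! Substituting `x = D⁻¹ X`, `y = D⁻¹ Y` turns the derivation rule for `D` at `(x, y)` into
`D [D⁻¹ X, D⁻¹ Y] = [X, D⁻¹ Y] + ± [D⁻¹ X, Y]`, and applying `D⁻¹` gives the Rota-Baxter rule at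
`(X, Y)`. Since `D` shifts degrees by `|D|` and `|D| + |D| = 0`, homogeneous `x` of degree `i`
correspond to homogeneous `X` of degree `i + |D|`, which accounts for the change of sign exponent. -/

theorem pm_exponent_shift (d i p : ZMod 2) : d * (d + (i + d) + p) = d * (i + p) := by
  revert d i p
  decide

theorem stmt_15_general (K V : Type*) [Field K] [AddCommGroup V] [Module K V]
    (G : ZMod 2 → Submodule K V) (p : ZMod 2) (m : V →ₗ[K] V →ₗ[K] V)
    (d : ZMod 2) (D E : V →ₗ[K] V)
    (hED : E ∘ₗ D = LinearMap.id) (hDE : D ∘ₗ E = LinearMap.id)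
    (hDg : ∀ i : ZMod 2, ∀ x ∈ G i, D x ∈ G (i + d))
    (hEg : ∀ i : ZMod 2, ∀ x ∈ G i, E x ∈ G (i + d)) :
    (∀ i j : ZMod 2, ∀ x ∈ G i, ∀ y ∈ G j,
        D (m x y) = m (D x) y + pm K (d * (i + p)) • m x (D y))
    ↔
    (∀ i j : ZMod 2, ∀ X ∈ G i, ∀ Y ∈ G j,
        m (E X) (E Y) = E (m X (E Y) + pm K (d * (d + i + p)) • m (E X) Y)) := by
  have hDE' (v : V) : D (E v) = v := LinearMap.congr_fun hDE v
  have hED' (v : V) : E (D v) = v := LinearMap.congr_fun hED v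
  constructor
  · intro hder i j X hX Y hY
    have h := hder (i + d) (j + d) (E X) (hEg i X hX) (E Y) (hEg j Y hY)
    rw [hDE', hDE', show d * (i + d + p) = d * (d + i + p) by ring] at h
    rw [← h, hED']
  · intro hrb i j x hx y hy
    have h := hrb (i + d) (j + d) (D x) (hDg i x hx) (D y) (hDg j y hy)
    rw [hED', hED', pm_exponent_shift] at h
    rw [h, hDE']

/-- a homogeneous invertible linear map `D` of parity `d` on a Super-Lie
superalgebra of parity `p` is a left derivation iff its inverse `E = D⁻¹` is a right
Rota-Baxter operator. -/
theorem stmt_15 (K V : Type*) [Field K] [AddCommGroup V] [Module K V]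
    (G : ZMod 2 → Submodule K V) (p : ZMod 2) (m : V →ₗ[K] V →ₗ[K] V)
    (hgrad : ∀ i j : ZMod 2, ∀ x ∈ G i, ∀ y ∈ G j, m x y ∈ G (i + j + p))
    (hskew : ∀ i j : ZMod 2, ∀ x ∈ G i, ∀ y ∈ G j,
      m x y = (-(pm K ((i + p) * (j + p)))) • m y x)
    (hjac : ∀ i j k : ZMod 2, ∀ x ∈ G i, ∀ y ∈ G j, ∀ z ∈ G k,
      m x (m y z) = m (m x y) z + pm K ((i + p) * (j + p)) • m y (m x z))
    (d : ZMod 2) (D E : V →ₗ[K] V)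
    (hED : E ∘ₗ D = LinearMap.id) (hDE : D ∘ₗ E = LinearMap.id)
    (hDg : ∀ i : ZMod 2, ∀ x ∈ G i, D x ∈ G (i + d))
    (hEg : ∀ i : ZMod 2, ∀ x ∈ G i, E x ∈ G (i + d)) :
    (∀ i j : ZMod 2, ∀ x ∈ G i, ∀ y ∈ G j,
        D (m x y) = m (D x) y + pm K (d * (i + p)) • m x (D y))
    ↔
    (∀ i j : ZMod 2, ∀ X ∈ G i, ∀ Y ∈ G j,
        m (E X) (E Y) = E (m X (E Y) + pm K (d * (d + i + p)) • m (E X) Y)) :=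
  stmt_15_general K V G p m d D E hED hDE hDg hEg
end

section
/- Let D be a homogeneous invertible linear map on a Super-Lie superalgebra (g,[·,·]) of parity p. Then D is a right derivation (D[x,y] = [x,D(y)] + (-1)^{|D|(|y|+p)}[D(x),y]) if and only if D^{-1} is a left Rota-Baxter operator of parity |D|: [D^{-1}(X),D^{-1}(Y)] = D^{-1}([D^{-1}(X),Y] + (-1)^{|D|(|Y|+|D|+p)}[X,D^{-1}(Y)]) for all homogeneous X,Y. -/
section SuperOperators

variable {K V : Type*} [Field K] [AddCommGroup V] [Module K V]

def IsRightSuperDerivation (G : ZMod 2 → Submodule K V) (p : ZMod 2)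
    (m : V →ₗ[K] V →ₗ[K] V) (d : ZMod 2) (D : V →ₗ[K] V) : Prop :=
  ∀ i j : ZMod 2, ∀ x ∈ G i, ∀ y ∈ G j,
    D (m x y) = m x (D y) + pm K (d * (j + p)) • m (D x) y

def IsLeftSuperRotaBaxter (G : ZMod 2 → Submodule K V) (p : ZMod 2)
    (m : V →ₗ[K] V →ₗ[K] V) (r : ZMod 2) (R : V →ₗ[K] V) : Prop :=
  ∀ i j : ZMod 2, ∀ X ∈ G i, ∀ Y ∈ G j,
    m (R X) (R Y) = R (m (R X) Y + pm K (r * (j + r + p)) • m X (R Y))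

theorem LinearEquiv.isRightSuperDerivation_iff_isLeftSuperRotaBaxter_symm
    {G : ZMod 2 → Submodule K V} {p : ZMod 2} {m : V →ₗ[K] V →ₗ[K] V} {d : ZMod 2}
    (e : V ≃ₗ[K] V) (he : ∀ i : ZMod 2, ∀ x ∈ G i, e x ∈ G (i + d))
    (he_symm : ∀ i : ZMod 2, ∀ x ∈ G i, e.symm x ∈ G (i + d)) :
    IsRightSuperDerivation G p m d e ↔ IsLeftSuperRotaBaxter G p m d e.symm := by
  constructor
  · intro hder i j X hX Y hY
    have h := hder (i + d) (j + d) (e.symm X) (he_symm i X hX) (e.symm Y) (he_symm j Y hY)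
    simp only [coe_coe, apply_symm_apply] at h
    simp only [coe_coe]
    rw [← h, symm_apply_apply]
  · intro hrb i j x hx y hy
    have h := hrb (i + d) (j + d) (e x) (he i x hx) (e y) (he j y hy)
    have hj : j + d + d = j := by rw [add_assoc, CharTwo.add_self_eq_zero, add_zero]
    simp only [coe_coe, symm_apply_apply, hj] at h
    simp only [coe_coe]
    rw [h, apply_symm_apply]

end SuperOperators

theorem stmt_16_general (K V : Type*) [Field K] [AddCommGroup V] [Module K V]
    (G : ZMod 2 → Submodule K V) (p : ZMod 2) (m : V →ₗ[K] V →ₗ[K] V)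
    (d : ZMod 2) (D E : V →ₗ[K] V)
    (hED : E ∘ₗ D = LinearMap.id) (hDE : D ∘ₗ E = LinearMap.id)
    (hDg : ∀ i : ZMod 2, ∀ x ∈ G i, D x ∈ G (i + d))
    (hEg : ∀ i : ZMod 2, ∀ x ∈ G i, E x ∈ G (i + d)) :
    (∀ i j : ZMod 2, ∀ x ∈ G i, ∀ y ∈ G j,
        D (m x y) = m x (D y) + pm K (d * (j + p)) • m (D x) y)
    ↔
    (∀ i j : ZMod 2, ∀ X ∈ G i, ∀ Y ∈ G j,
        m (E X) (E Y) = E (m (E X) Y + pm K (d * (j + d + p)) • m X (E Y))) :=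
  (LinearEquiv.ofLinearMap D E hDE hED).isRightSuperDerivation_iff_isLeftSuperRotaBaxter_symm
    hDg hEg

/-- a homogeneous invertible linear map `D` of parity `d` on a Super-Lie
superalgebra of parity `p` is a right derivation iff its inverse `E = D⁻¹` is a left
Rota-Baxter operator of parity `d`. -/
theorem stmt_16 (K V : Type*) [Field K] [AddCommGroup V] [Module K V]
    (G : ZMod 2 → Submodule K V) (p : ZMod 2) (m : V →ₗ[K] V →ₗ[K] V)
    (hgrad : ∀ i j : ZMod 2, ∀ x ∈ G i, ∀ y ∈ G j, m x y ∈ G (i + j + p))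
    (hskew : ∀ i j : ZMod 2, ∀ x ∈ G i, ∀ y ∈ G j,
      m x y = (-(pm K ((i + p) * (j + p)))) • m y x)
    (hjac : ∀ i j k : ZMod 2, ∀ x ∈ G i, ∀ y ∈ G j, ∀ z ∈ G k,
      m x (m y z) = m (m x y) z + pm K ((i + p) * (j + p)) • m y (m x z))
    (d : ZMod 2) (D E : V →ₗ[K] V)
    (hED : E ∘ₗ D = LinearMap.id) (hDE : D ∘ₗ E = LinearMap.id)
    (hDg : ∀ i : ZMod 2, ∀ x ∈ G i, D x ∈ G (i + d))
    (hEg : ∀ i : ZMod 2, ∀ x ∈ G i, E x ∈ G (i + d)) :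
    (∀ i j : ZMod 2, ∀ x ∈ G i, ∀ y ∈ G j,
        D (m x y) = m x (D y) + pm K (d * (j + p)) • m (D x) y)
    ↔
    (∀ i j : ZMod 2, ∀ X ∈ G i, ∀ Y ∈ G j,
        m (E X) (E Y) = E (m (E X) Y + pm K (d * (j + d + p)) • m X (E Y))) :=
  stmt_16_general K V G p m d D E hED hDE hDg hEg
end
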